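/- Let d ≥ 2 and set c₁ = (72·10^{d²}·d)^{−1}. Let M > 0 and let P ⊆ ℝ^d be M-separated and 2M-syndetic. Then for every p ∈ P and every w ∈ 𝒲 there exists an open subset I(p,w) ⊆ ℝ such that: (1) [0,(M/3)²] ∖ I(p,w) is non-empty; (2) for every 1 ≤ k < d and every τ ∈ D_k with τ ∪ {p} ∈ D_{k+1} and dist(p, H(τ)) ≤ c₁·M, if w' ∈ 𝒲 satisfies w'(q) = w(q) for all q ∈ τ and w'(p) ∉ I(p,w), then there is no τ̃ ∈ Del(P,w') with τ ∪ {p} ⊆ τ̃. -/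

import Mathlib

noncomputable section

open scoped Classical

open Metric

variable {d : ℕ}

/-- `P` is `M`-separated. -/
def IsSeparatedSet (M : ℝ) (P : Set (EuclideanSpace ℝ (Fin d))) : Prop :=
  ∀ p ∈ P, ∀ q ∈ P, p ≠ q → M ≤ dist p q

/-- `P` is `M`-syndetic. -/
def IsSyndeticSet (M : ℝ) (P : Set (EuclideanSpace ℝ (Fin d))) : Prop :=
  ∀ x : EuclideanSpace ℝ (Fin d), ∃ p ∈ P, dist x p < M

/-- `Δ_k(P)`: the `(k+1)`-element affinely independent subsets of `P`. -/
def DeltaK (k : ℕ) (P : Set (EuclideanSpace ℝ (Fin d))) :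
    Set (Finset (EuclideanSpace ℝ (Fin d))) :=
  {τ | τ.card = k + 1 ∧ ↑τ ⊆ P ∧
    AffineIndependent ℝ (fun q : (τ : Set (EuclideanSpace ℝ (Fin d))) =>
      (q : EuclideanSpace ℝ (Fin d)))}

/-- `(z,u)` is the orthosphere of `τ` with respect to the weight function `w`. -/
def IsOrthosphere (τ : Finset (EuclideanSpace ℝ (Fin d)))
    (w : EuclideanSpace ℝ (Fin d) → ℝ) (z : EuclideanSpace ℝ (Fin d)) (u : ℝ) : Prop :=
  z ∈ affineSpan ℝ (↑τ : Set (EuclideanSpace ℝ (Fin d))) ∧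
    ∀ p ∈ τ, ‖z - p‖ ^ 2 = u + w p

/-- `(z,u)` is empty in `(P,w)`. -/
def IsEmptySphere (P : Set (EuclideanSpace ℝ (Fin d)))
    (w : EuclideanSpace ℝ (Fin d) → ℝ) (z : EuclideanSpace ℝ (Fin d)) (u : ℝ) : Prop :=
  ∀ p ∈ P, 0 ≤ ‖z - p‖ ^ 2 - u - w p

/-- The set `𝒲` of weight functions on `P`: `0 ≤ w(p) ≤ (M/3)²` for `p ∈ P`. -/
def WeightFns (M : ℝ) (P : Set (EuclideanSpace ℝ (Fin d))) :
    Set (EuclideanSpace ℝ (Fin d) → ℝ) :=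
  {w | ∀ p ∈ P, w p ∈ Set.Icc (0 : ℝ) ((M / 3) ^ 2)}

/-- `Del(P,w)`: elements of `Δ_d(P)` whose orthosphere with respect to `w`
is empty in `(P,w)`. -/
def Del (P : Set (EuclideanSpace ℝ (Fin d))) (w : EuclideanSpace ℝ (Fin d) → ℝ) :
    Set (Finset (EuclideanSpace ℝ (Fin d))) :=
  {τ | τ ∈ DeltaK d P ∧ ∃ z u, IsOrthosphere τ w z u ∧ IsEmptySphere P w z u}

/-- `D_k`: those `τ ∈ Δ_k(P)` contained in some `τ' ∈ Del(P,w)` for some `w ∈ 𝒲`. -/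
def DSet (M : ℝ) (P : Set (EuclideanSpace ℝ (Fin d))) (k : ℕ) :
    Set (Finset (EuclideanSpace ℝ (Fin d))) :=
  {τ | τ ∈ DeltaK k P ∧ ∃ w ∈ WeightFns M P, ∃ τ' ∈ Del P w, τ ⊆ τ'}

/-!
For every candidate face `σ` near `p` (a nonempty set of at most `d` points of `P` within
`(102/25)M` of `p`) fix one weight function `W σ ∈ 𝒲` that agrees with `w` on `σ` and makes
`σ ∪ {p}` a weighted Delaunay face, and let `I(p,w)` be the union of the `ε`-neighbourhoods of
the values `W σ p`, where `ε = 9 c₁ M²`.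

If `w'` is another such weight for `τ`, the power functions `‖z - ·‖² - u` of the two
orthospheres differ by an affine function that equals the weight difference on `τ ∪ {p}`,
so it vanishes on `H(τ)` and
`|w' p - W τ p| ≤ 2 ‖z₁ - z₂‖ d(p, H(τ))`. Orthosphere radii are at most `(51/25)M` by
syndeticity, which gives `|w' p - W τ p| ≤ (204/25) c₁ M² < ε`, i.e. `w' p ∈ I(p,w)`.
On the other hand, by `M`-separation a volume count bounds the number of points of `P`
near `p` by `(229/25)^d`, hence the number of candidate faces by `(229/25)^(d²)`, which keeps
the total length of `I(p,w)` below `(M/3)²`.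
-/

open Finset MeasureTheory
open scoped RealInnerProductSpace

/-- Every nonempty `σ ⊆ S` with `#σ ≤ n` is the image of a map `Fin n → S`. -/
lemma Finset.card_filter_nonempty_card_le_le_pow {α : Type*} (S : Finset α) (n : ℕ) :
    (S.powerset.filter fun σ => σ.Nonempty ∧ σ.card ≤ n).card ≤ S.card ^ n := by
  calc _ ≤ ((Fintype.piFinset fun _ : Fin n => S).image fun f => univ.image f).card := by
        refine card_le_card fun σ hσ => ?_
        obtain ⟨hσS, ⟨q, hq⟩, hcard⟩ : σ ⊆ S ∧ σ.Nonempty ∧ σ.card ≤ n := by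
          simpa only [mem_filter, mem_powerset] using hσ
        let f : Fin n → α := fun i => if h : (i : ℕ) < σ.card then σ.equivFin.symm ⟨i, h⟩ else q
        have hfσ : ∀ i, f i ∈ σ := fun i => by
          simp only [f]
          split_ifs
          exacts [Subtype.prop _, hq]
        refine mem_image.mpr ⟨f, Fintype.mem_piFinset.mpr fun i => hσS (hfσ i), ?_⟩
        ext x
        refine ⟨fun hx => ?_, fun hx => ?_⟩
        · obtain ⟨i, -, rfl⟩ := mem_image.mp hx
          exact hfσ i
        · refine mem_image.mpr ⟨⟨σ.equivFin ⟨x, hx⟩, (Fin.is_lt _).trans_le hcard⟩, mem_univ _, ?_⟩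
          simp [f]
    _ ≤ (Fintype.piFinset fun _ : Fin n => S).card := card_image_le
    _ = S.card ^ n := Fintype.card_piFinset_const S n

lemma Real.Icc_diff_biUnion_ball_nonempty {ι : Type*} (s : Finset ι) (c : ι → ℝ) {a b ε : ℝ}
    (hε : 0 ≤ ε) (h : s.card * (2 * ε) < b - a) :
    (Set.Icc a b \ ⋃ i ∈ s, ball (c i) ε).Nonempty := by
  rw [Set.sdiff_nonempty]
  intro hsub
  have hvol := (measure_mono (μ := volume) hsub).trans (measure_biUnion_finset_le s _)
  simp only [Real.volume_Icc, Real.volume_ball, sum_const, nsmul_eq_mul] at hvol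
  rw [← ENNReal.ofReal_natCast, ← ENNReal.ofReal_mul (Nat.cast_nonneg _),
    ENNReal.ofReal_le_ofReal_iff (by positivity)] at hvol
  linarith

section InnerProduct

variable {V : Type*} [NormedAddCommGroup V] [InnerProductSpace ℝ V]

lemma inner_eq_of_mem_affineSpan {s : Set V} {v : V} {c : ℝ} (h : ∀ q ∈ s, ⟪v, q⟫ = c)
    {y : V} (hy : y ∈ affineSpan ℝ s) : ⟪v, y⟫ = c := by
  refine affineSpan_induction hy h fun t a b e ha hb he => ?_
  rw [vsub_eq_sub, vadd_eq_add, inner_add_right, inner_smul_right, inner_sub_right, ha, hb, he]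
  ring

lemma abs_inner_sub_le_mul_infDist {s : Set V} (hs : s.Nonempty) {v : V} {c : ℝ}
    (h : ∀ q ∈ s, ⟪v, q⟫ = c) (x : V) :
    |⟪v, x⟫ - c| ≤ ‖v‖ * infDist x (affineSpan ℝ s : Set V) := by
  obtain ⟨q, hq⟩ := hs
  rcases eq_or_ne v 0 with rfl | hv
  · simp [← h q hq]
  have hspan : (affineSpan ℝ s : Set V).Nonempty := ⟨q, subset_affineSpan ℝ s hq⟩
  rw [← div_le_iff₀' (norm_pos_iff.mpr hv), le_infDist hspan]
  intro y hy
  rw [div_le_iff₀' (norm_pos_iff.mpr hv), ← inner_eq_of_mem_affineSpan h hy, ← inner_sub_right,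
    dist_eq_norm]
  exact abs_real_inner_le_norm v (x - y)

lemma abs_sub_le_of_norm_sub_sq_eq {s : Set V} (hs : s.Nonempty) {w₁ w₂ : V → ℝ}
    (hagree : ∀ q ∈ s, w₁ q = w₂ q) {z₁ z₂ : V} {u₁ u₂ : ℝ}
    (h₁ : ∀ q ∈ s, ‖z₁ - q‖ ^ 2 = u₁ + w₁ q) (h₂ : ∀ q ∈ s, ‖z₂ - q‖ ^ 2 = u₂ + w₂ q)
    {x : V} (hx₁ : ‖z₁ - x‖ ^ 2 = u₁ + w₁ x) (hx₂ : ‖z₂ - x‖ ^ 2 = u₂ + w₂ x) :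
    |w₁ x - w₂ x| ≤ 2 * ‖z₁ - z₂‖ * infDist x (affineSpan ℝ s : Set V) := by
  have hpow : ∀ y, ‖z₁ - y‖ ^ 2 - ‖z₂ - y‖ ^ 2 = ‖z₁‖ ^ 2 - ‖z₂‖ ^ 2 - 2 * ⟪z₁ - z₂, y⟫ := by
    intro y
    rw [norm_sub_sq_real, norm_sub_sq_real, inner_sub_left]
    ring
  have hc : ∀ q ∈ s, ⟪z₁ - z₂, q⟫ = (‖z₁‖ ^ 2 - ‖z₂‖ ^ 2 - u₁ + u₂) / 2 := by
    intro q hq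
    linarith [hpow q, h₁ q hq, h₂ q hq, hagree q hq]
  have hx : w₁ x - w₂ x = -2 * (⟪z₁ - z₂, x⟫ - (‖z₁‖ ^ 2 - ‖z₂‖ ^ 2 - u₁ + u₂) / 2) := by
    linarith [hpow x]
  rw [hx, abs_mul, abs_neg, abs_two, mul_assoc]
  gcongr
  exact abs_inner_sub_le_mul_infDist hs hc x

end InnerProduct

section Packing

variable {M R : ℝ} {P : Set (EuclideanSpace ℝ (Fin d))}

lemma IsSeparatedSet.card_le_of_subset_closedBall (hM : 0 < M) (hR : 0 ≤ R)
    (hsep : IsSeparatedSet M P) {x : EuclideanSpace ℝ (Fin d)}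
    {T : Finset (EuclideanSpace ℝ (Fin d))} (hT : ↑T ⊆ P ∩ closedBall x R) :
    (T.card : ℝ) ≤ ((2 * R + M) / M) ^ d := by
  have hdisj : (T : Set (EuclideanSpace ℝ (Fin d))).PairwiseDisjoint (ball · (M / 2)) :=
    fun a ha b hb hab => ball_disjoint_ball (by linarith [hsep a (hT ha).1 b (hT hb).1 hab])
  have hsub : (⋃ q ∈ T, ball q (M / 2)) ⊆ closedBall x (R + M / 2) := by
    simp only [Set.iUnion_subset_iff]
    intro q hq y hy
    rw [mem_closedBall]
    linarith [dist_triangle y q x, mem_ball.mp hy, mem_closedBall.mp (hT hq).2]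
  have hvol := (measure_biUnion_finset hdisj fun _ _ => measurableSet_ball).symm.trans_le
    (measure_mono (μ := volume) hsub)
  rw [Measure.addHaar_closedBall _ _ (by linarith), Finset.sum_congr rfl fun q _ =>
    Measure.addHaar_ball_of_pos volume q (half_pos hM), sum_const, nsmul_eq_mul, ← mul_assoc,
    ENNReal.mul_le_mul_iff_left (measure_ball_pos _ _ one_pos).ne' measure_ball_lt_top.ne,
    finrank_euclideanSpace_fin, ← ENNReal.ofReal_natCast, ← ENNReal.ofReal_mul (by positivity),
    ENNReal.ofReal_le_ofReal_iff (by positivity)] at hvol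
  rw [div_pow, le_div_iff₀ (by positivity)]
  calc (T.card : ℝ) * M ^ d = 2 ^ d * (T.card * (M / 2) ^ d) := by
        rw [div_pow]; field_simp
    _ ≤ 2 ^ d * (R + M / 2) ^ d := by gcongr
    _ = (2 * R + M) ^ d := by rw [← mul_pow]; ring_nf

lemma IsSeparatedSet.finite_inter_closedBall (hM : 0 < M) (hsep : IsSeparatedSet M P)
    (x : EuclideanSpace ℝ (Fin d)) (R : ℝ) : (P ∩ closedBall x R).Finite := by
  refine Set.Finite.subset ?_ (Set.inter_subset_inter_right P (closedBall_subset_closedBall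
    (le_max_left R 0)))
  by_contra hinf
  obtain ⟨T, hT, hcard⟩ := Set.Infinite.exists_subset_card_eq hinf
    (⌊((2 * max R 0 + M) / M) ^ d⌋₊ + 1)
  have := hsep.card_le_of_subset_closedBall hM (le_max_right R 0) hT
  rw [hcard, Nat.cast_add_one] at this
  linarith [Nat.lt_floor_add_one (((2 * max R 0 + M) / M) ^ d)]

lemma IsSeparatedSet.card_subsets_card_le_mul_lt (hd : 2 ≤ d) (hM : 0 < M)
    (hsep : IsSeparatedSet M P) {x : EuclideanSpace ℝ (Fin d)}
    {S : Finset (EuclideanSpace ℝ (Fin d))} (hS : ↑S ⊆ P ∩ closedBall x (102 / 25 * M)) :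
    ((S.powerset.filter fun σ => σ.Nonempty ∧ σ.card ≤ d).card : ℝ) * 162 <
      72 * 10 ^ (d ^ 2) * d := by
  have hScard : (S.card : ℝ) ≤ (229 / 25) ^ d := by
    convert hsep.card_le_of_subset_closedBall hM (by positivity) hS using 2
    field_simp
    ring
  have hsmall : (229 / 250 : ℝ) ^ (d ^ 2) * 162 < 72 * d :=
    calc (229 / 250 : ℝ) ^ (d ^ 2) * 162 ≤ (229 / 250) ^ 4 * 162 :=
          mul_le_mul_of_nonneg_right (pow_le_pow_of_le_one (by norm_num) (by norm_num)
            (by nlinarith)) (by norm_num)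
      _ < 72 * 2 := by norm_num
      _ ≤ 72 * d := by gcongr; exact_mod_cast hd
  calc _ ≤ (S.card : ℝ) ^ d * 162 := by
        gcongr
        exact_mod_cast S.card_filter_nonempty_card_le_le_pow d
    _ ≤ ((229 / 25) ^ d) ^ d * 162 := by gcongr
    _ = (229 / 250) ^ (d ^ 2) * 162 * 10 ^ (d ^ 2) := by
        rw [← pow_mul, ← sq, show (229 / 25 : ℝ) = 229 / 250 * 10 by norm_num, mul_pow]; ring
    _ < 72 * d * 10 ^ (d ^ 2) := by gcongr
    _ = 72 * 10 ^ (d ^ 2) * d := by ring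

end Packing

section WeightedDelaunay

variable {M : ℝ} {P : Set (EuclideanSpace ℝ (Fin d))} {w : EuclideanSpace ℝ (Fin d) → ℝ}
  {s : Finset (EuclideanSpace ℝ (Fin d))}

def IsDelFace (P : Set (EuclideanSpace ℝ (Fin d))) (w : EuclideanSpace ℝ (Fin d) → ℝ)
    (s : Finset (EuclideanSpace ℝ (Fin d))) : Prop :=
  ∃ τ' ∈ Del P w, s ⊆ τ'

lemma IsDelFace.exists_emptySphere (h : IsDelFace P w s) :
    ∃ z u, IsEmptySphere P w z u ∧ ∀ x ∈ s, x ∈ P ∧ ‖z - x‖ ^ 2 = u + w x := by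
  obtain ⟨τ', ⟨⟨-, hτ'P, -⟩, z, u, ⟨-, hz⟩, hempty⟩, hs⟩ := h
  exact ⟨z, u, hempty, fun x hx => ⟨hτ'P (hs hx), hz x (hs hx)⟩⟩

/-- For `q ∈ P` within `2M` of `z`, emptiness gives
`‖z - x‖² ≤ ‖z - q‖² - w q + w x < 4M² + (M/3)²`, and `(51/25)² > 37/9`. -/
lemma norm_sub_le_of_isEmptySphere (hsyn : IsSyndeticSet (2 * M) P) (hw : w ∈ WeightFns M P)
    {z : EuclideanSpace ℝ (Fin d)} {u : ℝ} (hempty : IsEmptySphere P w z u)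
    {x : EuclideanSpace ℝ (Fin d)} (hx : x ∈ P) (hxz : ‖z - x‖ ^ 2 = u + w x) :
    ‖z - x‖ ≤ 51 / 25 * M := by
  obtain ⟨q, hq, hzq⟩ := hsyn z
  rw [dist_eq_norm] at hzq
  have hM : 0 < M := by linarith [norm_nonneg (z - q)]
  have hzq2 : ‖z - q‖ ^ 2 < (2 * M) ^ 2 := by gcongr
  have hzx2 : ‖z - x‖ ^ 2 ≤ (51 / 25 * M) ^ 2 := by
    nlinarith [hempty q hq, (hw q hq).1, (hw x hx).2]
  exact pow_le_pow_iff_left₀ (norm_nonneg _) (by positivity) two_ne_zero |>.mp hzx2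

lemma IsDelFace.subset_inter_closedBall (hsyn : IsSyndeticSet (2 * M) P)
    (hw : w ∈ WeightFns M P) (h : IsDelFace P w s) {x : EuclideanSpace ℝ (Fin d)} (hx : x ∈ s) :
    ↑s ⊆ P ∩ closedBall x (102 / 25 * M) := by
  obtain ⟨z, u, hempty, hs⟩ := h.exists_emptySphere
  intro y hy
  have hzx := norm_sub_le_of_isEmptySphere hsyn hw hempty (hs x hx).1 (hs x hx).2
  have hzy := norm_sub_le_of_isEmptySphere hsyn hw hempty (hs y hy).1 (hs y hy).2
  rw [← dist_eq_norm] at hzx hzy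
  refine ⟨(hs y hy).1, mem_closedBall.mpr ?_⟩
  linarith [dist_triangle y z x, dist_comm y z]

lemma IsDelFace.abs_sub_le (hsyn : IsSyndeticSet (2 * M) P)
    {w₁ w₂ : EuclideanSpace ℝ (Fin d) → ℝ} (hw₁ : w₁ ∈ WeightFns M P) (hw₂ : w₂ ∈ WeightFns M P)
    {p : EuclideanSpace ℝ (Fin d)} {τ : Finset (EuclideanSpace ℝ (Fin d))} (hτ : τ.Nonempty)
    (hagree : ∀ q ∈ τ, w₁ q = w₂ q)
    (h₁ : IsDelFace P w₁ (insert p τ)) (h₂ : IsDelFace P w₂ (insert p τ)) :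
    |w₁ p - w₂ p| ≤
      204 / 25 * M * infDist p (affineSpan ℝ (τ : Set (EuclideanSpace ℝ (Fin d))) : Set _) := by
  obtain ⟨z₁, u₁, hempty₁, hs₁⟩ := h₁.exists_emptySphere
  obtain ⟨z₂, u₂, hempty₂, hs₂⟩ := h₂.exists_emptySphere
  obtain ⟨q, hq⟩ := hτ
  have hq₁ := hs₁ q (mem_insert_of_mem hq)
  have hq₂ := hs₂ q (mem_insert_of_mem hq)
  have hz : ‖z₁ - z₂‖ ≤ 102 / 25 * M := by
    calc ‖z₁ - z₂‖ ≤ ‖z₁ - q‖ + ‖z₂ - q‖ := by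
          simpa only [norm_sub_rev q z₂] using norm_sub_le_norm_sub_add_norm_sub z₁ q z₂
      _ ≤ 51 / 25 * M + 51 / 25 * M := add_le_add
            (norm_sub_le_of_isEmptySphere hsyn hw₁ hempty₁ hq₁.1 hq₁.2)
            (norm_sub_le_of_isEmptySphere hsyn hw₂ hempty₂ hq₂.1 hq₂.2)
      _ = 102 / 25 * M := by ring
  have hδ := abs_sub_le_of_norm_sub_sq_eq ⟨q, hq⟩ hagree
    (fun x hx => (hs₁ x (mem_insert_of_mem hx)).2) (fun x hx => (hs₂ x (mem_insert_of_mem hx)).2)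
    (hs₁ p (mem_insert_self p τ)).2 (hs₂ p (mem_insert_self p τ)).2
  have hδ₀ := infDist_nonneg (x := p) (s := affineSpan ℝ (τ : Set (EuclideanSpace ℝ (Fin d))))
  nlinarith

end WeightedDelaunay

theorem stmt7_general (hd : 2 ≤ d) (M : ℝ) (hM : 0 < M)
    (P : Set (EuclideanSpace ℝ (Fin d)))
    (hsep : IsSeparatedSet M P) (hsyn : IsSyndeticSet (2 * M) P)
    (p : EuclideanSpace ℝ (Fin d))
    (w : EuclideanSpace ℝ (Fin d) → ℝ) :
    ∃ I : Set ℝ, IsOpen I ∧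
      (Set.Icc (0 : ℝ) ((M / 3) ^ 2) \ I).Nonempty ∧
      ∀ k : ℕ, 1 ≤ k → k < d →
        ∀ τ ∈ DSet M P k, insert p τ ∈ DSet M P (k + 1) →
          Metric.infDist p (affineSpan ℝ (↑τ : Set (EuclideanSpace ℝ (Fin d)))
              : Set (EuclideanSpace ℝ (Fin d)))
            ≤ (72 * 10 ^ (d ^ 2) * (d : ℝ))⁻¹ * M →
          ∀ w' ∈ WeightFns M P, (∀ q ∈ τ, w' q = w q) → w' p ∉ I →
            ¬∃ τ' ∈ Del P w', insert p τ ⊆ τ' := by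
  set c₁ : ℝ := (72 * 10 ^ (d ^ 2) * (d : ℝ))⁻¹
  set ε : ℝ := 9 * c₁ * M ^ 2
  have hS := hsep.finite_inter_closedBall hM p (102 / 25 * M)
  set 𝒯 := hS.toFinset.powerset.filter fun σ => σ.Nonempty ∧ σ.card ≤ d
  -- `162 * c₁ * M ^ 2 / 9 = 2 * ε`, so this says `#𝒯 * 2ε < (M / 3) ^ 2`
  have h𝒯 : (𝒯.card : ℝ) * 162 * c₁ < 1 := by
    rw [mul_inv_lt_iff₀ (by positivity), one_mul]
    exact hsep.card_subsets_card_le_mul_lt hd hM hS.coe_toFinset.subset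
  let IsAdmissible σ w' := w' ∈ WeightFns M P ∧ (∀ q ∈ σ, w' q = w q) ∧ IsDelFace P w' (insert p σ)
  let W σ := Classical.epsilon (IsAdmissible σ)
  refine ⟨⋃ σ ∈ 𝒯, ball (W σ p) ε, isOpen_biUnion fun _ _ => isOpen_ball,
    Real.Icc_diff_biUnion_ball_nonempty 𝒯 _ (by positivity) ?_, ?_⟩
  · nlinarith [pow_pos hM 2]
  rintro k - hkd τ ⟨⟨hcard, -, -⟩, -⟩ - hdist w' hw' hagree hnot hface
  change IsDelFace P w' (insert p τ) at hface
  have hτ : τ.Nonempty := card_pos.mp (by omega)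
  have hτ𝒯 : τ ∈ 𝒯 := by
    refine mem_filter.mpr ⟨mem_powerset.mpr fun q hq => ?_, hτ, by omega⟩
    rw [hS.mem_toFinset]
    exact hface.subset_inter_closedBall hsyn hw' (mem_insert_self p τ) (mem_insert_of_mem hq)
  obtain ⟨hW, hWagree, hWface⟩ :=
    Classical.epsilon_spec (p := IsAdmissible τ) ⟨w', hw', hagree, hface⟩
  refine hnot (Set.mem_biUnion hτ𝒯 ?_)
  rw [mem_ball, Real.dist_eq]
  calc |w' p - W τ p|
      ≤ 204 / 25 * M * infDist p (affineSpan ℝ (τ : Set (EuclideanSpace ℝ (Fin d))) : Set _) :=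
        hface.abs_sub_le hsyn hw' hW hτ (fun q hq => (hagree q hq).trans (hWagree q hq).symm)
          hWface
    _ ≤ 204 / 25 * M * (c₁ * M) := by gcongr
    _ < ε := by nlinarith [pow_pos hM 2, show 0 < c₁ by positivity]

/-- Sliver proposition: with `c₁ = (72·10^{d²}·d)⁻¹`, for every `p ∈ P` and `w ∈ 𝒲`
there is an open set `I(p,w) ⊆ ℝ` with `[0,(M/3)²] ∖ I(p,w)` non-empty, such that
for all `1 ≤ k < d` and `τ ∈ D_k` with `τ ∪ {p} ∈ D_{k+1}` and `d(p,H(τ)) ≤ c₁·M`,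
if `w' ∈ 𝒲` agrees with `w` on `τ` and `w'(p) ∉ I(p,w)`, then no cell of
`Del(P,w')` contains `τ ∪ {p}`. -/
theorem stmt7 (hd : 2 ≤ d) (M : ℝ) (hM : 0 < M)
    (P : Set (EuclideanSpace ℝ (Fin d)))
    (hsep : IsSeparatedSet M P) (hsyn : IsSyndeticSet (2 * M) P)
    (p : EuclideanSpace ℝ (Fin d)) (hp : p ∈ P)
    (w : EuclideanSpace ℝ (Fin d) → ℝ) (hw : w ∈ WeightFns M P) :
    ∃ I : Set ℝ, IsOpen I ∧
      (Set.Icc (0 : ℝ) ((M / 3) ^ 2) \ I).Nonempty ∧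
      ∀ k : ℕ, 1 ≤ k → k < d →
        ∀ τ ∈ DSet M P k, insert p τ ∈ DSet M P (k + 1) →
          Metric.infDist p (affineSpan ℝ (↑τ : Set (EuclideanSpace ℝ (Fin d)))
              : Set (EuclideanSpace ℝ (Fin d)))
            ≤ (72 * 10 ^ (d ^ 2) * (d : ℝ))⁻¹ * M →
          ∀ w' ∈ WeightFns M P, (∀ q ∈ τ, w' q = w q) → w' p ∉ I →
            ¬∃ τ' ∈ Del P w', insert p τ ⊆ τ' :=
  stmt7_general hd M hM P hsep hsyn p w
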